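/- arXiv:2509.25662 — 6 statements merged into one kernel-verified Lean document; each statement's English description precedes it below -/
import Mathlib

section
/- The greedy explanation algorithm returns a subset-minimal abductive explanation: if XP is obtained from x by iterating over all features and removing a feature's literal whenever its removal preserves the property that every extension receives decision d, then XP is an abductive explanation for d and no proper subset of XP is an abductive explanation for d. -/
open Classical in
/-- One greedy step: try to remove variable `v`'s literal; keep the removal
only if every extension of the reduced set still receives decision `Δ x`. -/
noncomputable def greedyStep {V D : Type} [DecidableEq V]
    (Δ : (V → Bool) → D) (x : V → Bool) (S : Finset V) (v : V) : Finset V :=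
  if ∀ x' : V → Bool, (∀ u ∈ S.erase v, x' u = x u) → Δ x' = Δ x
  then S.erase v else S

section Aux

variable {V D : Type} [DecidableEq V] (Δ : (V → Bool) → D) (x : V → Bool)

/-- The abductive-explanation property. -/
def AXp (S : Finset V) : Prop :=
  ∀ x' : V → Bool, (∀ u ∈ S, x' u = x u) → Δ x' = Δ x

lemma AXp_mono {A B : Finset V} (h : A ⊆ B) (hA : AXp Δ x A) : AXp Δ x B :=
  fun x' hx' => hA x' (fun u hu => hx' u (h hu))

lemma greedyStep_subset (S : Finset V) (v : V) : greedyStep Δ x S v ⊆ S := by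
  unfold greedyStep
  split
  · exact Finset.erase_subset _ _
  · exact Finset.Subset.refl _

lemma fold_subset (l : List V) (S : Finset V) :
    l.foldl (greedyStep Δ x) S ⊆ S := by
  induction l generalizing S with
  | nil => simp
  | cons v tl ih =>
      simpa using (ih (greedyStep Δ x S v)).trans (greedyStep_subset Δ x S v)

lemma greedyStep_AXp (S : Finset V) (v : V) (h : AXp Δ x S) :
    AXp Δ x (greedyStep Δ x S v) := by
  unfold greedyStep
  split
  · rename_i hc
    exact fun x' hx' => hc x' hx'
  · exact h

lemma fold_AXp (l : List V) (S : Finset V) (h : AXp Δ x S) :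
    AXp Δ x (l.foldl (greedyStep Δ x) S) := by
  induction l generalizing S with
  | nil => simpa
  | cons v tl ih => exact ih _ (greedyStep_AXp Δ x S v h)

lemma fold_min (l : List V) (S : Finset V) (v : V) (hv : v ∈ l)
    (hmem : v ∈ l.foldl (greedyStep Δ x) S) :
    ¬ AXp Δ x ((l.foldl (greedyStep Δ x) S).erase v) := by
  induction l generalizing S with
  | nil => simp at hv
  | cons v0 tl ih =>
      simp only [List.foldl_cons] at hmem ⊢
      rcases List.mem_cons.mp hv with rfl | h
      · -- v = v0
        by_cases hcond : ∀ x' : V → Bool,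
            (∀ u ∈ S.erase v, x' u = x u) → Δ x' = Δ x
        · rw [show greedyStep Δ x S v = S.erase v from if_pos hcond] at hmem
          exact absurd (fold_subset Δ x tl _ hmem) (Finset.notMem_erase v _)
        · rw [show greedyStep Δ x S v = S from if_neg hcond] at hmem ⊢
          intro hP
          exact hcond (AXp_mono Δ x
            (Finset.erase_subset_erase v (fold_subset Δ x tl S)) hP)
      · exact ih _ h hmem

end Aux

theorem greedy_returns_subset_minimal_explanation
    {V D : Type} [DecidableEq V] [Fintype V]
    (Δ : (V → Bool) → D) (x : V → Bool)
    (l : List V) (hl : ∀ v : V, v ∈ l)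
    (XP : Finset V) (hXP : XP = l.foldl (greedyStep Δ x) Finset.univ) :
    (∀ x' : V → Bool, (∀ u ∈ XP, x' u = x u) → Δ x' = Δ x) ∧
    (∀ T : Finset V, T ⊂ XP →
      ¬ (∀ x' : V → Bool, (∀ u ∈ T, x' u = x u) → Δ x' = Δ x)) := by
  have hu : AXp Δ x (Finset.univ : Finset V) := by
    intro x' hx'
    have : x' = x := funext fun u => hx' u (Finset.mem_univ u)
    rw [this]
  subst hXP
  constructor
  · exact fold_AXp Δ x l Finset.univ hu
  · intro T hT hP
    obtain ⟨v, hvXP, hvT⟩ := Finset.exists_of_ssubset hT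
    have hTsub : T ⊆ (l.foldl (greedyStep Δ x) Finset.univ).erase v :=
      Finset.subset_erase.mpr ⟨hT.subset, hvT⟩
    exact fold_min Δ x l Finset.univ v (hl v) hvXP (AXp_mono Δ x hTsub hP)
end

section
/- A decision Δ(x) is biased (i.e., there exists x' differing from x only on the protected feature p with Δ(x') ≠ Δ(x)) if and only if every subset-minimal abductive explanation for Δ(x) contained in x mentions the protected feature p. -/
theorem decision_biased_iff_all_minimal_explanations_mention_p
    {V D : Type} [Fintype V] [DecidableEq V]
    (Δ : (V → Bool) → D) (p : V) (x : V → Bool) :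
    (Δ (Function.update x p (!(x p))) ≠ Δ x) ↔
    (∀ XP : Set V,
      (∀ x' : V → Bool, (∀ u ∈ XP, x' u = x u) → Δ x' = Δ x) →
      (∀ T : Set V, T ⊂ XP →
        ¬ (∀ x' : V → Bool, (∀ u ∈ T, x' u = x u) → Δ x' = Δ x)) →
      p ∈ XP) := by
  constructor
  · intro hb XP hexp _
    by_contra hp
    apply hb
    apply hexp
    intro u hu
    rw [Function.update_of_ne]
    rintro rfl; exact hp hu
  · intro h heq
    have hexpl0 : ∀ x' : V → Bool, (∀ u ∈ ({p}ᶜ : Set V), x' u = x u) → Δ x' = Δ x := by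
      intro x' hx'
      by_cases hxp : x' p = x p
      · have hxx : x' = x := funext fun u => by
          by_cases hu : u = p
          · subst hu; exact hxp
          · exact hx' u hu
        rw [hxx]
      · have hxx : x' = Function.update x p (!(x p)) := funext fun u => by
          by_cases hu : u = p
          · subst hu
            rw [Function.update_self]
            exact Bool.eq_not_iff.mpr hxp
          · rw [Function.update_of_ne hu]; exact hx' u hu
        rw [hxx]; exact heq
    have key : ∀ n : ℕ, ∀ S : Set V, S.ncard ≤ n →
        (∀ x' : V → Bool, (∀ u ∈ S, x' u = x u) → Δ x' = Δ x) →
        ∃ T, T ⊆ S ∧ (∀ x' : V → Bool, (∀ u ∈ T, x' u = x u) → Δ x' = Δ x) ∧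
          ∀ T' : Set V, T' ⊂ T →
            ¬ (∀ x' : V → Bool, (∀ u ∈ T', x' u = x u) → Δ x' = Δ x) := by
      intro n
      induction n with
      | zero =>
        intro S hS hE
        have hS0 : S = ∅ := (Set.ncard_eq_zero (Set.toFinite S)).mp (Nat.le_zero.mp hS)
        exact ⟨S, subset_rfl, hE, fun T' hT' _ => absurd (hS0 ▸ hT') (by simp [Set.ssubset_iff_subset_ne, Set.subset_empty_iff])⟩
      | succ n ih =>
        intro S hS hE
        by_cases hmin : ∀ T' : Set V, T' ⊂ S →
            ¬ (∀ x' : V → Bool, (∀ u ∈ T', x' u = x u) → Δ x' = Δ x)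
        · exact ⟨S, subset_rfl, hE, hmin⟩
        · push_neg at hmin
          obtain ⟨T', hsub, hE'⟩ := hmin
          have hlt : T'.ncard ≤ n := by
            have := Set.ncard_lt_ncard hsub (Set.toFinite S)
            omega
          obtain ⟨T, hTs, hTE, hTmin⟩ := ih T' hlt hE'
          exact ⟨T, hTs.trans hsub.subset, hTE, hTmin⟩
    obtain ⟨T, hTs, hTE, hTmin⟩ :=
      key (({p}ᶜ : Set V).ncard) ({p}ᶜ) le_rfl hexpl0
    have := h T hTE hTmin
    exact hTs this rfl
end

section
/- The decision function Δ is biased (there exists an individual whose decision changes when only the protected feature p is flipped) if and only if there exists an individual x such that some subset-minimal abductive explanation for Δ(x) mentions p. -/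
theorem process_biased_iff_some_minimal_explanation_mentions_p
    {V D : Type} [Fintype V] [DecidableEq V]
    (Δ : (V → Bool) → D) (p : V) :
    (∃ x : V → Bool, Δ (Function.update x p (!(x p))) ≠ Δ x) ↔
    (∃ (x : V → Bool) (XP : Set V),
      (∀ x' : V → Bool, (∀ u ∈ XP, x' u = x u) → Δ x' = Δ x) ∧
      (∀ T : Set V, T ⊂ XP →
        ¬ (∀ x' : V → Bool, (∀ u ∈ T, x' u = x u) → Δ x' = Δ x)) ∧
      p ∈ XP) := by
  constructor
  · rintro ⟨x, hx⟩
    -- the set of explanations of x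
    set S : Set (Set V) := {XP | ∀ x' : V → Bool, (∀ u ∈ XP, x' u = x u) → Δ x' = Δ x}
      with hS
    have hne : (Set.univ : Set V) ∈ S := by
      intro x' h
      have : x' = x := funext fun u => h u trivial
      rw [this]
    obtain ⟨XP, hXP, hmin⟩ :=
      (Finite.wellFounded_of_trans_of_irrefl
        (· ⊂ · : Set V → Set V → Prop)).has_min S ⟨_, hne⟩
    have hp : p ∈ XP := by
      by_contra hp
      apply hx
      apply hXP
      intro u hu
      rw [Function.update_apply]
      split
      · exact absurd (by simp_all) hp
      · rfl
    exact ⟨x, XP, hXP, fun T hT h => hmin T h hT, hp⟩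
  · rintro ⟨x, XP, hexp, hmin, hp⟩
    have h := hmin (XP \ {p}) ⟨Set.diff_subset, fun h => (h hp).2 rfl⟩
    push_neg at h
    obtain ⟨x', hagree, hne⟩ := h
    refine ⟨x', fun heq => hne ?_⟩
    have hxp : x' p ≠ x p := by
      intro hpe
      apply hne
      apply hexp
      intro u hu
      by_cases hup : u = p
      · subst hup; exact hpe
      · exact hagree u ⟨hu, hup⟩
    have : Function.update x' p (!(x' p)) = Function.update x' p (x p) := by
      funext u
      by_cases hup : u = p
      · rw [hup]; simp only [Function.update_self]
        cases hb : x' p <;> cases hc : x p <;> simp_all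
      · simp [Function.update_of_ne hup]
    rw [this] at heq
    rw [← heq]
    apply hexp
    intro u hu
    by_cases hup : u = p
    · subst hup; simp
    · rw [Function.update_of_ne hup]; exact hagree u ⟨hu, hup⟩
end

section
/- If the background knowledge K is independent of the protected variable p (i.e., the set of models of K is closed under flipping p), then no variable q ≠ p is a proxy variable for p. -/
theorem no_proxy_if_K_independent_of_p
    {V : Type} [DecidableEq V]
    (K : (V → Bool) → Prop) (p : V)
    (hK : ∀ x : V → Bool, K x → K (Function.update x p (!(x p)))) :
    ∀ q : V, q ≠ p →
      ¬ ∃ (Φ : (V → Bool) → Prop) (νq νp : Bool),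
        (∀ x : V → Bool, Φ (Function.update x q (!(x q))) ↔ Φ x) ∧
        (∀ x : V → Bool, Φ (Function.update x p (!(x p))) ↔ Φ x) ∧
        (∃ x : V → Bool, K x ∧ Φ x ∧ x p ≠ νp) ∧
        (∀ x : V → Bool, K x → Φ x → x q = νq → x p = νp) ∧
        (∃ x : V → Bool, K x ∧ Φ x ∧ x q = νq) := by
  rintro q hqp ⟨Φ, νq, νp, hΦq, hΦp, ⟨y, hKy, hΦy, hyp⟩, hiv, ⟨x, hKx, hΦx, hxq⟩⟩
  have hxp : x p = νp := hiv x hKx hΦx hxq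
  set x' := Function.update x p (!(x p)) with hx'
  have hKx' : K x' := hK x hKx
  have hΦx' : Φ x' := (hΦp x).2 hΦx
  have hx'q : x' q = νq := by
    rw [hx', Function.update_of_ne hqp]; exact hxq
  have hx'p : x' p = νp := hiv x' hKx' hΦx' hx'q
  rw [hx', Function.update_self, hxp] at hx'p
  exact absurd hx'p (by simp)
end

section
/- If the decision function Δ does not depend on the protected variable p (Δ(x) = Δ(x') whenever x' is the p-flip of x), then for every individual x and every subset-minimal abductive explanation XP for Δ(x), XP does not mention p. -/
theorem p_independent_process_minimal_explanations_avoid_p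
    {V D : Type} [DecidableEq V]
    (Δ : (V → Bool) → D) (p : V)
    (hindep : ∀ x : V → Bool, Δ (Function.update x p (!(x p))) = Δ x) :
    ∀ (x : V → Bool) (XP : Set V),
      (∀ x' : V → Bool, (∀ u ∈ XP, x' u = x u) → Δ x' = Δ x) →
      (∀ T : Set V, T ⊂ XP →
        ¬ (∀ x' : V → Bool, (∀ u ∈ T, x' u = x u) → Δ x' = Δ x)) →
      p ∉ XP := by
  intro x XP hexp hmin hp
  apply hmin (XP \ {p})
  · constructor
    · exact Set.diff_subset
    · intro hsub
      exact (hsub hp).2 rfl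
  · intro x' hagree
    by_cases h : x' p = x p
    · apply hexp
      intro u hu
      by_cases hup : u = p
      · subst hup; exact h
      · exact hagree u ⟨hu, hup⟩
    · have h2 : Δ (Function.update x' p (!(x' p))) = Δ x' := hindep x'
      rw [← h2]
      apply hexp
      intro u hu
      by_cases hup : u = p
      · subst hup
        simp only [Function.update_self]
        cases hx : x u <;> cases hx' : x' u <;> simp_all
      · rw [Function.update_of_ne hup]
        exact hagree u ⟨hu, hup⟩
end

section
/- If all subset-minimal abductive explanations of every individual avoid the protected variable p, then Δ is unbiased: flipping p never changes a decision. -/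
theorem minimal_explanations_avoid_p_implies_unbiased
    {V D : Type} [Fintype V] [DecidableEq V]
    (Δ : (V → Bool) → D) (p : V)
    (havoid : ∀ (x : V → Bool) (XP : Set V),
      (∀ x' : V → Bool, (∀ u ∈ XP, x' u = x u) → Δ x' = Δ x) →
      (∀ T : Set V, T ⊂ XP →
        ¬ (∀ x' : V → Bool, (∀ u ∈ T, x' u = x u) → Δ x' = Δ x)) →
      p ∉ XP) :
    ∀ x : V → Bool, Δ (Function.update x p (!(x p))) = Δ x := by
  classical
  intro x
  set E : Set V → Prop :=
    fun S => ∀ x' : V → Bool, (∀ u ∈ S, x' u = x u) → Δ x' = Δ x with hE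
  have huniv : E (↑(Finset.univ : Finset V)) := by
    intro x' h
    have : x' = x := funext fun u => h u (by simp)
    rw [this]
  -- pick a minimal-cardinality explaining finset
  obtain ⟨F, hFmem, hFmin⟩ :=
    Finset.exists_min_image
      ((Finset.univ : Finset V).powerset.filter (fun (F : Finset V) => E ↑F))
      Finset.card
      ⟨Finset.univ, Finset.mem_filter.mpr ⟨by simp, by simpa using huniv⟩⟩
  have hFE : E ↑F := (Finset.mem_filter.mp hFmem).2
  have hmin : ∀ T : Set V, T ⊂ ↑F → ¬ E T := by
    intro T hT hTE
    have hTfin : T.Finite := (F.finite_toSet).subset hT.subset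
    set G := hTfin.toFinset with hG
    have hGT : (↑G : Set V) = T := hTfin.coe_toFinset
    have hGF : G ⊂ F := by
      rw [← Finset.coe_ssubset, hGT]; exact hT
    have hGmem : G ∈ (Finset.univ : Finset V).powerset.filter (fun (F : Finset V) => E ↑F) := by
      refine Finset.mem_filter.mpr ⟨by simp, ?_⟩
      rw [hGT]; exact hTE
    have := hFmin G hGmem
    exact absurd (Finset.card_lt_card hGF) (not_lt.mpr this)
  have hp : p ∉ (↑F : Set V) := havoid x ↑F hFE hmin
  apply hFE
  intro u hu
  have : u ≠ p := fun h => hp (h ▸ hu)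
  simp [Function.update, this]
end
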